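/- Let f, g : (0,∞) → ℝ be smooth positive functions, N ≥ 2 and 1 ≤ p ≤ N-1 integers, and suppose ω₁ : (0,∞) → V is a smooth curve in a finite-dimensional inner product space V satisfying ∂/∂t( g(t)^((N-2p+1)/2) f(t)^(-1/2) ∂ω₁/∂t ) = f(t)^(1/2) g(t)^((N-2p-1)/2) A ω₁ where A is a positive semidefinite symmetric operator on V. If moreover ⟨ g^((N-2p+1)/2) f^(-1/2) ∂ω₁/∂t(t), ω₁(t) ⟩ → 0 as t → 0⁺, then t ↦ ‖ω₁(t)‖ is nondecreasing on (0,∞). -/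

import Mathlib

open Set Filter
open scoped RealInnerProductSpace

/-- Abstract monotonicity step of Dodziuk's argument: if
`(g^((N-2p+1)/2) f^(-1/2) ω₁')' = f^(1/2) g^((N-2p-1)/2) A ω₁` with `A` symmetric
positive semidefinite, and the boundary pairing tends to `0` at `0⁺`, then
`t ↦ ‖ω₁(t)‖` is nondecreasing on `(0,∞)`. -/
theorem stmt_4 {V : Type*} [NormedAddCommGroup V] [InnerProductSpace ℝ V]
    [FiniteDimensional ℝ V]
    (f g : ℝ → ℝ) (N p : ℤ) (hN : 2 ≤ N) (hp1 : 1 ≤ p) (hp2 : p ≤ N - 1)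
    (hf_smooth : ContDiff ℝ (⊤ : ℕ∞) f) (hg_smooth : ContDiff ℝ (⊤ : ℕ∞) g)
    (hf_pos : ∀ t ∈ Ioi (0 : ℝ), 0 < f t) (hg_pos : ∀ t ∈ Ioi (0 : ℝ), 0 < g t)
    (ω₁ : ℝ → V) (hω : ContDiffOn ℝ (⊤ : ℕ∞) ω₁ (Ioi 0))
    (A : V →ₗ[ℝ] V)
    (hA_symm : ∀ x y : V, ⟪A x, y⟫ = ⟪x, A y⟫)
    (hA_pos : ∀ x : V, 0 ≤ ⟪A x, x⟫)
    (hode : ∀ t ∈ Ioi (0 : ℝ),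
      deriv (fun s => (g s ^ (((N : ℝ) - 2 * p + 1) / 2) * f s ^ (-(1 : ℝ) / 2)) •
        deriv ω₁ s) t
        = (f t ^ ((1 : ℝ) / 2) * g t ^ (((N : ℝ) - 2 * p - 1) / 2)) • A (ω₁ t))
    (hbdry : Tendsto
      (fun t => ⟪(g t ^ (((N : ℝ) - 2 * p + 1) / 2) * f t ^ (-(1 : ℝ) / 2)) •
        deriv ω₁ t, ω₁ t⟫)
      (nhdsWithin 0 (Ioi 0)) (nhds 0)) :
    MonotoneOn (fun t => ‖ω₁ t‖) (Ioi 0) := by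
  -- abbreviations (as plain functions, definitionally equal to those in hypotheses)
  have hω'_smooth : ContDiffOn ℝ (⊤ : ℕ∞) (deriv ω₁) (Ioi 0) :=
    hω.deriv_of_isOpen isOpen_Ioi (by simp)
  have hω_diff : ∀ t ∈ Ioi (0:ℝ), DifferentiableAt ℝ ω₁ t := fun t ht =>
    (hω.contDiffAt (isOpen_Ioi.mem_nhds ht)).differentiableAt (by simp)
  have hω'_diff : ∀ t ∈ Ioi (0:ℝ), DifferentiableAt ℝ (deriv ω₁) t := fun t ht =>
    (hω'_smooth.contDiffAt (isOpen_Ioi.mem_nhds ht)).differentiableAt (by simp)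
  have hc_diff : ∀ t ∈ Ioi (0:ℝ), DifferentiableAt ℝ
      (fun s => g s ^ (((N : ℝ) - 2 * p + 1) / 2) * f s ^ (-(1 : ℝ) / 2)) t := by
    intro t ht
    exact ((hg_smooth.differentiable (by simp) t).rpow_const
        (Or.inl (hg_pos t ht).ne')).mul
      ((hf_smooth.differentiable (by simp) t).rpow_const
        (Or.inl (hf_pos t ht).ne'))
  have hc_pos : ∀ t ∈ Ioi (0:ℝ),
      0 < g t ^ (((N : ℝ) - 2 * p + 1) / 2) * f t ^ (-(1 : ℝ) / 2) := fun t ht =>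
    mul_pos (Real.rpow_pos_of_pos (hg_pos t ht) _) (Real.rpow_pos_of_pos (hf_pos t ht) _)
  have hu_diff : ∀ t ∈ Ioi (0:ℝ), DifferentiableAt ℝ
      (fun s => (g s ^ (((N : ℝ) - 2 * p + 1) / 2) * f s ^ (-(1 : ℝ) / 2)) • deriv ω₁ s) t :=
    fun t ht => (hc_diff t ht).smul (hω'_diff t ht)
  -- the boundary pairing F
  set F : ℝ → ℝ := fun t => ⟪(g t ^ (((N : ℝ) - 2 * p + 1) / 2) * f t ^ (-(1 : ℝ) / 2)) •
      deriv ω₁ t, ω₁ t⟫ with hFdef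
  have hF_hasderiv : ∀ t ∈ Ioi (0:ℝ),
      HasDerivAt F
        (⟪(g t ^ (((N : ℝ) - 2 * p + 1) / 2) * f t ^ (-(1 : ℝ) / 2)) • deriv ω₁ t,
            deriv ω₁ t⟫ +
         ⟪deriv (fun s => (g s ^ (((N : ℝ) - 2 * p + 1) / 2) * f s ^ (-(1 : ℝ) / 2)) •
            deriv ω₁ s) t, ω₁ t⟫) t := fun t ht =>
    HasDerivAt.inner ℝ ((hu_diff t ht).hasDerivAt) ((hω_diff t ht).hasDerivAt)
  have hF_deriv_nonneg : ∀ t ∈ Ioi (0:ℝ), 0 ≤ deriv F t := by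
    intro t ht
    rw [(hF_hasderiv t ht).deriv]
    have h1 : (0:ℝ) ≤ ⟪(g t ^ (((N : ℝ) - 2 * p + 1) / 2) * f t ^ (-(1 : ℝ) / 2)) •
        deriv ω₁ t, deriv ω₁ t⟫ := by
      rw [real_inner_smul_left]
      exact mul_nonneg (hc_pos t ht).le real_inner_self_nonneg
    have h2 : (0:ℝ) ≤ ⟪deriv (fun s => (g s ^ (((N : ℝ) - 2 * p + 1) / 2) *
        f s ^ (-(1 : ℝ) / 2)) • deriv ω₁ s) t, ω₁ t⟫ := by
      rw [hode t ht, real_inner_smul_left]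
      exact mul_nonneg
        (mul_nonneg (Real.rpow_pos_of_pos (hf_pos t ht) _).le
          (Real.rpow_pos_of_pos (hg_pos t ht) _).le) (hA_pos (ω₁ t))
    linarith
  have hF_mono : MonotoneOn F (Ioi 0) := by
    apply monotoneOn_of_deriv_nonneg (convex_Ioi 0)
    · exact fun t ht => ((hF_hasderiv t ht).differentiableAt.continuousAt).continuousWithinAt
    · rw [interior_Ioi]
      exact fun t ht => ((hF_hasderiv t ht).differentiableAt).differentiableWithinAt
    · rw [interior_Ioi]; exact hF_deriv_nonneg
  have hF_nonneg : ∀ t ∈ Ioi (0:ℝ), 0 ≤ F t := by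
    intro t ht
    refine le_of_tendsto hbdry ?_
    filter_upwards [Ioo_mem_nhdsGT_of_mem (left_mem_Ico.2 ht)] with s hs
    exact hF_mono hs.1 ht hs.2.le
  have hinner_nonneg : ∀ t ∈ Ioi (0:ℝ), 0 ≤ ⟪deriv ω₁ t, ω₁ t⟫ := by
    intro t ht
    have := hF_nonneg t ht
    rw [hFdef] at this
    simp only [real_inner_smul_left] at this
    exact nonneg_of_mul_nonneg_right this (hc_pos t ht)
  -- monotonicity of the squared norm
  have hG_mono : MonotoneOn (fun t => ⟪ω₁ t, ω₁ t⟫) (Ioi 0) := by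
    have hGd : ∀ t ∈ Ioi (0:ℝ), HasDerivAt (fun t => ⟪ω₁ t, ω₁ t⟫)
        (⟪ω₁ t, deriv ω₁ t⟫ + ⟪deriv ω₁ t, ω₁ t⟫) t := fun t ht =>
      HasDerivAt.inner ℝ ((hω_diff t ht).hasDerivAt) ((hω_diff t ht).hasDerivAt)
    apply monotoneOn_of_deriv_nonneg (convex_Ioi 0)
    · exact fun t ht => ((hGd t ht).differentiableAt.continuousAt).continuousWithinAt
    · rw [interior_Ioi]
      exact fun t ht => ((hGd t ht).differentiableAt).differentiableWithinAt
    · rw [interior_Ioi]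
      intro t ht
      rw [(hGd t ht).deriv]
      have h1 := hinner_nonneg t ht
      have h2 : ⟪ω₁ t, deriv ω₁ t⟫ = ⟪deriv ω₁ t, ω₁ t⟫ := real_inner_comm _ _
      linarith
  intro a ha b hb hab
  have h2 : ⟪ω₁ a, ω₁ a⟫ ≤ ⟪ω₁ b, ω₁ b⟫ := hG_mono ha hb hab
  rw [real_inner_self_eq_norm_sq, real_inner_self_eq_norm_sq] at h2
  show ‖ω₁ a‖ ≤ ‖ω₁ b‖
  nlinarith [norm_nonneg (ω₁ a), norm_nonneg (ω₁ b)]
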